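/- Let K be a compact linearly ordered topological space and let G : K → ℝ be of bounded variation and right-continuous. Define the variation function T_G : K → ℝ by T_G(x) = |G(0_K)| + Var(G restricted to [0_K, x]), where Var denotes total variation over finite divisions. Then T_G is nondecreasing and right-continuous. -/
import Mathlib

open Topology


/-- The set of division sums of `G` over `[⊥, x]`: sums `Σ |G (s (i+1)) − G (s i)|`
over finite divisions `⊥ = s 0 ≤ s 1 ≤ ⋯ ≤ s n = x`. -/
def divisionSums {K : Type*} [LinearOrder K] [OrderBot K] (G : K → ℝ) (x : K) :
    Set ℝ :=
  {v | ∃ (n : ℕ) (s : Fin (n + 1) → K), Monotone s ∧ s 0 = ⊥ ∧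
    s (Fin.last n) = x ∧ v = ∑ i : Fin n, |G (s i.succ) - G (s i.castSucc)|}

def divS {K : Type*} [LinearOrder K] (G : K → ℝ) (a b : K) : Set ℝ :=
  {v | ∃ (n : ℕ) (s : Fin (n + 1) → K), Monotone s ∧ s 0 = a ∧
    s (Fin.last n) = b ∧ v = ∑ i : Fin n, |G (s i.succ) - G (s i.castSucc)|}

lemma divS_le_endpoints {K : Type*} [LinearOrder K] {G : K → ℝ} {a b : K} {v : ℝ}
    (hv : v ∈ divS G a b) : a ≤ b := by
  obtain ⟨n, s, hm, h0, hl, -⟩ := hv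
  rw [← h0, ← hl]; exact hm (Fin.zero_le _)

lemma divS_zero {K : Type*} [LinearOrder K] (G : K → ℝ) (a : K) : (0:ℝ) ∈ divS G a a :=
  ⟨0, fun _ => a, monotone_const, rfl, rfl, by simp⟩

lemma divS_single {K : Type*} [LinearOrder K] (G : K → ℝ) {a b : K} (hab : a ≤ b) :
    |G b - G a| ∈ divS G a b := by
  refine ⟨1, ![a, b], ?_, rfl, rfl, by simp [Fin.sum_univ_succ]⟩
  intro i j hij
  fin_cases i <;> fin_cases j <;> simp_all

lemma divS_snoc {K : Type*} [LinearOrder K] (G : K → ℝ) {a b c : K} (hbc : b ≤ c)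
    {v : ℝ} (hv : v ∈ divS G a b) : v + |G c - G b| ∈ divS G a c := by
  obtain ⟨n, s, hm, h0, hl, hsum⟩ := hv
  refine ⟨n + 1, Fin.snoc s c, ?_, ?_, ?_, ?_⟩
  · refine Fin.monotone_iff_le_succ.2 fun i => ?_
    induction i using Fin.lastCases with
    | last =>
      rw [Fin.succ_last, Fin.snoc_last, Fin.snoc_castSucc, hl]; exact hbc
    | cast j =>
      rw [Fin.succ_castSucc, Fin.snoc_castSucc, Fin.snoc_castSucc]
      exact hm (Fin.castSucc_le_succ j)
  · rw [show (0 : Fin (n+1+1)) = Fin.castSucc 0 from rfl, Fin.snoc_castSucc, h0]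
  · exact Fin.snoc_last _ _
  · rw [Fin.sum_univ_castSucc]
    congr 1
    · rw [hsum]
      refine Finset.sum_congr rfl fun i _ => ?_
      rw [Fin.succ_castSucc, Fin.snoc_castSucc, Fin.snoc_castSucc]
    · rw [Fin.succ_last, Fin.snoc_last, Fin.snoc_castSucc, hl]

lemma divS_tail {K : Type*} [LinearOrder K] (G : K → ℝ) {a c : K} {n : ℕ}
    (s : Fin (n + 2) → K) (hm : Monotone s) (h0 : s 0 = a) (hl : s (Fin.last (n+1)) = c) :
    a ≤ s 1 ∧ Monotone (s ∘ Fin.succ) ∧ (s ∘ Fin.succ) 0 = s 1 ∧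
      (s ∘ Fin.succ) (Fin.last n) = c ∧
      (∑ i : Fin (n+1), |G (s i.succ) - G (s i.castSucc)|) =
        |G (s 1) - G a| +
          ∑ i : Fin n, |G ((s ∘ Fin.succ) i.succ) - G ((s ∘ Fin.succ) i.castSucc)| := by
  refine ⟨?_, ?_, ?_, ?_, ?_⟩
  · rw [← h0]; exact hm (Fin.zero_le _)
  · exact hm.comp (Fin.strictMono_succ.monotone)
  · simp [Fin.succ_zero_eq_one]
  · rw [Function.comp_apply, ← hl, Fin.succ_last]
  · rw [Fin.sum_univ_succ, Fin.succ_zero_eq_one, Fin.castSucc_zero, h0]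
    congr 1

lemma divS_concat_aux {K : Type*} [LinearOrder K] (G : K → ℝ) :
    ∀ (m : ℕ) (a b c : K) (v w : ℝ), v ∈ divS G a b →
      (∃ s : Fin (m+1) → K, Monotone s ∧ s 0 = b ∧ s (Fin.last m) = c ∧
        w = ∑ i : Fin m, |G (s i.succ) - G (s i.castSucc)|) →
      v + w ∈ divS G a c := by
  intro m
  induction m with
  | zero =>
    rintro a b c v w hv ⟨s, hm, h0, hl, hs⟩
    have hbc : b = c := by rw [← h0, ← hl]; rfl
    have hw : w = 0 := by simpa using hs
    subst hbc; rw [hw, add_zero]; exact hv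
  | succ m ih =>
    rintro a b c v w hv ⟨s, hm, h0, hl, hs⟩
    obtain ⟨hb1, hm', h0', hl', hsum⟩ := divS_tail G s hm h0 hl
    have h1 : v + |G (s 1) - G b| ∈ divS G a (s 1) := divS_snoc G hb1 hv
    have h2 := ih a (s 1) c _ _ h1 ⟨s ∘ Fin.succ, hm', h0', hl', rfl⟩
    have : v + w = v + |G (s 1) - G b| +
        ∑ i : Fin m, |G ((s ∘ Fin.succ) i.succ) - G ((s ∘ Fin.succ) i.castSucc)| := by
      rw [hs, hsum]; ring
    rw [this]; exact h2

lemma divS_concat {K : Type*} [LinearOrder K] (G : K → ℝ) {a b c : K} {v w : ℝ}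
    (hv : v ∈ divS G a b) (hw : w ∈ divS G b c) : v + w ∈ divS G a c := by
  obtain ⟨m, s, hm, h0, hl, hs⟩ := hw
  exact divS_concat_aux G m a b c v w hv ⟨s, hm, h0, hl, hs⟩

lemma divS_first {K : Type*} [LinearOrder K] (G : K → ℝ) :
    ∀ (n : ℕ) (a c : K), a < c → ∀ v : ℝ,
      (∃ s : Fin (n+1) → K, Monotone s ∧ s 0 = a ∧ s (Fin.last n) = c ∧
        v = ∑ i : Fin n, |G (s i.succ) - G (s i.castSucc)|) →
      ∃ b, a < b ∧ b ≤ c ∧ ∃ w ∈ divS G b c, v ≤ |G b - G a| + w := by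
  intro n
  induction n with
  | zero =>
    rintro a c hac v ⟨s, hm, h0, hl, hs⟩
    have : a = c := by rw [← h0, ← hl]; rfl
    exact absurd this hac.ne
  | succ n ih =>
    rintro a c hac v ⟨s, hm, h0, hl, hs⟩
    obtain ⟨hb1, hm', h0', hl', hsum⟩ := divS_tail G s hm h0 hl
    rcases hb1.eq_or_lt with heq | hlt
    · have h0'' : (s ∘ Fin.succ) 0 = a := by rw [h0', ← heq]
      obtain ⟨b, hab, hbc, w, hw, hle⟩ := ih a c hac _ ⟨s ∘ Fin.succ, hm', h0'', hl', rfl⟩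
      refine ⟨b, hab, hbc, w, hw, ?_⟩
      have : |G (s 1) - G a| = 0 := by rw [← heq]; simp
      rw [hs, hsum, this, zero_add]
      exact hle
    · refine ⟨s 1, hlt, ?_, _, ⟨n, s ∘ Fin.succ, hm', h0', hl', rfl⟩, ?_⟩
      · rw [← hl]; exact hm (Fin.le_last _)
      · rw [hs, hsum]

lemma divS_split {K : Type*} [LinearOrder K] (G : K → ℝ) {b : K} :
    ∀ (n : ℕ) (a c : K), a ≤ b → b ≤ c → ∀ v : ℝ,
      (∃ s : Fin (n+1) → K, Monotone s ∧ s 0 = a ∧ s (Fin.last n) = c ∧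
        v = ∑ i : Fin n, |G (s i.succ) - G (s i.castSucc)|) →
      ∃ v1 ∈ divS G a b, ∃ v2 ∈ divS G b c, v ≤ v1 + v2 := by
  intro n
  induction n with
  | zero =>
    rintro a c hab hbc v ⟨s, hm, h0, hl, hs⟩
    have hac : a = c := by rw [← h0, ← hl]; rfl
    have hba : b = a := le_antisymm (hac ▸ hbc) hab
    subst hba
    have hv : v = 0 := by simpa using hs
    exact ⟨0, divS_zero G b, 0, hac ▸ divS_zero G b, by simp [hv]⟩
  | succ n ih =>
    rintro a c hab hbc v ⟨s, hm, h0, hl, hs⟩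
    obtain ⟨hb1, hm', h0', hl', hsum⟩ := divS_tail G s hm h0 hl
    rcases le_or_gt (s 1) b with hsb | hbs
    · obtain ⟨w1, hw1, w2, hw2, hle⟩ :=
        ih (s 1) c hsb hbc _ ⟨s ∘ Fin.succ, hm', h0', hl', rfl⟩
      refine ⟨|G (s 1) - G a| + w1, divS_concat G (divS_single G hb1) hw1, w2, hw2, ?_⟩
      rw [hs, hsum]; linarith
    · refine ⟨|G b - G a|, divS_single G hab, |G (s 1) - G b| +
        ∑ i : Fin n, |G ((s ∘ Fin.succ) i.succ) - G ((s ∘ Fin.succ) i.castSucc)|,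
        divS_concat G (divS_single G hbs.le) ⟨n, s ∘ Fin.succ, hm', h0', hl', rfl⟩, ?_⟩
      rw [hs, hsum]
      have := abs_sub_le (G (s 1)) (G b) (G a)
      linarith

/-- Let `K` be a compact line with minimum `⊥` and maximum `⊤`, and let
`G : K → ℝ` be right-continuous and of bounded variation.  The variation
function `T x = |G ⊥| + Var(G|[⊥,x])` is nondecreasing and right-continuous. -/
theorem stmt9 {K : Type*} [LinearOrder K] [TopologicalSpace K] [OrderTopology K]
    [CompactSpace K] [Nonempty K] [OrderBot K] [OrderTop K]
    (G : K → ℝ)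
    (hG_rc : ∀ x : K, ContinuousWithinAt G (Set.Ici x) x)
    (hBV : BddAbove (divisionSums G ⊤))
    (T : K → ℝ)
    (hT : ∀ x : K, IsLUB (divisionSums G x) (T x - |G ⊥|)) :
    Monotone T ∧ ∀ x : K, ContinuousWithinAt T (Set.Ici x) x := by
  have hdiv : ∀ y : K, divisionSums G y = divS G ⊥ y := fun _ => rfl
  simp only [hdiv] at hBV hT
  obtain ⟨M, hM⟩ := hBV
  have hbdd : ∀ a b : K, BddAbove (divS G a b) := by
    intro a b
    refine ⟨M, fun v hv => ?_⟩
    have h1 : |G a - G ⊥| + v ∈ divS G ⊥ b := divS_concat G (divS_single G bot_le) hv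
    have h2 : (|G a - G ⊥| + v) + |G ⊤ - G b| ∈ divS G ⊥ ⊤ := divS_snoc G le_top h1
    have h3 := hM h2
    have := abs_nonneg (G a - G ⊥); have := abs_nonneg (G ⊤ - G b); linarith
  have hTeq : ∀ x : K, sSup (divS G ⊥ x) = T x - |G ⊥| := fun x =>
    (hT x).csSup_eq ⟨_, divS_single G bot_le⟩
  have hmono : Monotone T := by
    intro x y hxy
    have h1 : sSup (divS G ⊥ x) ≤ sSup (divS G ⊥ y) := by
      refine csSup_le ⟨_, divS_single G bot_le⟩ fun v hv => ?_
      have h2 := le_csSup (hbdd ⊥ y) (divS_snoc G hxy hv)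
      have := abs_nonneg (G y - G x); linarith
    have e1 := hTeq x; have e2 := hTeq y; linarith
  refine ⟨hmono, fun x => ?_⟩
  rcases eq_or_ne (𝓝[Set.Ioi x] x) ⊥ with hbot | hne
  · have hici : 𝓝[Set.Ici x] x = pure x := by
      rw [← Set.Ioi_insert, nhdsWithin_insert, hbot, sup_bot_eq]
    show Filter.Tendsto T (𝓝[Set.Ici x] x) (𝓝 (T x))
    rw [hici]
    exact tendsto_pure_nhds T x
  · haveI : (𝓝[Set.Ioi x] x).NeBot := ⟨hne⟩
    have hxlt : ∃ u, x < u := by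
      obtain ⟨u, hu⟩ := Filter.nonempty_of_mem
        (self_mem_nhdsWithin : Set.Ioi x ∈ 𝓝[Set.Ioi x] x)
      exact ⟨u, hu⟩
    have key : ∀ ε : ℝ, 0 < ε → ∃ y, x < y ∧ sSup (divS G x y) < ε := by
      intro ε hε
      by_contra hcon
      push_neg at hcon
      have hball := hG_rc x (Metric.ball_mem_nhds (G x) (by positivity : (0:ℝ) < ε/8))
      obtain ⟨O, hO, hxO, hOsub⟩ := mem_nhdsWithin.mp hball
      obtain ⟨u, hxu, hIco⟩ := exists_Ico_subset_of_mem_nhds (hO.mem_nhds hxO) hxlt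
      have hGsmall : ∀ t ∈ Set.Ico x u, |G t - G x| < ε/8 := by
        intro t ht
        have : t ∈ G ⁻¹' Metric.ball (G x) (ε/8) := hOsub ⟨hIco ht, ht.1⟩
        simpa [Real.dist_eq] using this
      have hIoo : (Set.Ioo x u).Nonempty := by
        have h1 : Set.Iio u ∩ Set.Ioi x ∈ 𝓝[Set.Ioi x] x :=
          Filter.inter_mem (mem_nhdsWithin_of_mem_nhds (Iio_mem_nhds hxu)) self_mem_nhdsWithin
        obtain ⟨y, hy⟩ := Filter.nonempty_of_mem h1
        exact ⟨y, hy.2, hy.1⟩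
      obtain ⟨y₁, hxy₁, hy₁u⟩ := hIoo
      have hVy : ε ≤ sSup (divS G x y₁) := hcon y₁ hxy₁
      have hlt : sSup (divS G x y₁) - ε/8 < sSup (divS G x y₁) := by linarith
      obtain ⟨v, hv, hvlt⟩ := exists_lt_of_lt_csSup ⟨_, divS_single G hxy₁.le⟩ hlt
      obtain ⟨n, s, hm, h0, hl, hs⟩ := hv
      obtain ⟨b, hxb, hby, w, hw, hvle⟩ := divS_first G n x y₁ hxy₁ v ⟨s, hm, h0, hl, hs⟩
      have hGb : |G b - G x| < ε/8 := hGsmall b ⟨hxb.le, lt_of_le_of_lt hby hy₁u⟩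
      have hwle : w ≤ sSup (divS G b y₁) := le_csSup (hbdd b y₁) hw
      have hpq : ∀ p ∈ divS G x b, ∀ q ∈ divS G b y₁,
          p + q ≤ sSup (divS G x y₁) := fun p hp q hq =>
        le_csSup (hbdd x y₁) (divS_concat G hp hq)
      have hsuper : sSup (divS G x b) + sSup (divS G b y₁) ≤ sSup (divS G x y₁) := by
        have h1 : sSup (divS G x b) ≤ sSup (divS G x y₁) - sSup (divS G b y₁) := by
          refine csSup_le ⟨_, divS_single G hxb.le⟩ fun p hp => ?_
          have h2 : sSup (divS G b y₁) ≤ sSup (divS G x y₁) - p :=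
            csSup_le ⟨_, divS_single G hby⟩ fun q hq => by linarith [hpq p hp q hq]
          linarith
        linarith
      have hεxb : ε ≤ sSup (divS G x b) := hcon b hxb
      linarith
    show Filter.Tendsto T (𝓝[Set.Ici x] x) (𝓝 (T x))
    rw [Metric.tendsto_nhds]
    intro ε hε
    obtain ⟨y, hxy, hVy⟩ := key ε hε
    have hmem : Set.Ici x ∩ Set.Iio y ∈ 𝓝[Set.Ici x] x :=
      Filter.inter_mem self_mem_nhdsWithin (mem_nhdsWithin_of_mem_nhds (Iio_mem_nhds hxy))
    filter_upwards [hmem] with z hz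
    obtain ⟨hxz, hzy⟩ := hz
    have h1 : T x ≤ T z := hmono hxz
    have hsub : sSup (divS G ⊥ z) ≤ sSup (divS G ⊥ x) + sSup (divS G x z) := by
      refine csSup_le ⟨_, divS_single G bot_le⟩ fun v hv => ?_
      obtain ⟨n, s, hm, h0, hl, hs⟩ := hv
      obtain ⟨v1, hv1, v2, hv2, hle⟩ :=
        divS_split G (b := x) n ⊥ z bot_le hxz v ⟨s, hm, h0, hl, hs⟩
      have := le_csSup (hbdd ⊥ x) hv1
      have := le_csSup (hbdd x z) hv2
      linarith
    have hmon2 : sSup (divS G x z) ≤ sSup (divS G x y) := by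
      refine csSup_le ⟨_, divS_single G hxz⟩ fun v hv => ?_
      have := le_csSup (hbdd x y) (divS_snoc G hzy.le hv)
      have := abs_nonneg (G y - G z); linarith
    have e1 := hTeq x; have e2 := hTeq z
    rw [Real.dist_eq, abs_of_nonneg (by linarith)]
    linarith
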